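/- Let ω be a prime with ω ≡ 5 (mod 6), δ ∈ ℤ, and n ≥ 1. Then p_{δω-4}(nω - (ω+1)/6) ≡ 0 (mod ω), where p_k(n) is the coefficient of qⁿ in (q;q)_∞^{-k}. -/

import Mathlib

open PowerSeries Finset

/-- The Euler product `(q;q)_∞ = ∏_{m≥1} (1 - q^m)` as a formal power series over `ℤ`. -/
noncomputable def eulerProd : PowerSeries ℤ :=
  PowerSeries.mk fun n =>
    PowerSeries.coeff (R := ℤ) n (∏ k ∈ Finset.range (n + 1), (1 - (X : PowerSeries ℤ) ^ (1 + k)))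

/-- The generating function `1/(q;q)_∞^k` of the generalized partition function `p_k`,
for `k ∈ ℤ` (the inverse is taken via `invOfUnit`, since `(q;q)_∞` has constant term 1). -/
noncomputable def genPartGF (k : ℤ) : PowerSeries ℤ :=
  if 0 ≤ k then (PowerSeries.invOfUnit eulerProd 1) ^ k.toNat
  else eulerProd ^ (-k).toNat

/-!
Modulo `ω`, the generating function `(q;q)_∞ ^ (4 - δω)` is `(q;q)_∞ ^ 4 · G ^ ω` with
`G = (q;q)_∞ ^ (-δ)`, and by Frobenius `G ^ ω` only has exponents divisible by `ω`. Since
`6 (nω - (ω + 1)/6) + 1 ≡ 0 (mod ω)`, it suffices that the coefficient of `q ^ a` in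
`(q;q)_∞ ^ 4 = (q;q)_∞ · (q;q)_∞ ^ 3` vanishes modulo `ω` whenever `ω ∣ 6a + 1`. By Euler's
pentagonal theorem and Jacobi's identity this coefficient is a sum of terms `± (2k + 1)` over the
splittings `a = m(3m - 1)/2 + k(k + 1)/2`, and for each of them
`(6m - 1)² + 3 (2k + 1)² = 4 (6a + 1) ≡ 0`; as `-3` is not a square modulo `ω ≡ 5 (mod 6)`,
`ω ∣ 2k + 1`.

Jacobi's identity is obtained from the finite identity
`(q;q)_N ² = ∑_{k ≤ N} (-1)^k (2k + 1) q^(k(k+1)/2) [2N+1 choose N-k]_q`, a consequence of the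
`q`-binomial theorem, because `[a + b choose a]_q · (q;q)_∞ ≡ 1 (mod q ^ (n + 1))` once `a, b ≥ n`.
-/

lemma pow_choose_two_succ {M : Type*} [Monoid M] (q : M) (a : ℕ) :
    q ^ (a + 1).choose 2 = q ^ a * q ^ a.choose 2 := by
  rw [Nat.choose_succ_succ, Nat.choose_one_right, pow_add]

lemma le_choose_two_succ (k : ℕ) : k ≤ (k + 1).choose 2 := by
  rw [Nat.choose_succ_succ, Nat.choose_one_right]
  exact Nat.le_add_right k _

lemma two_mul_choose_two_succ (k : ℕ) : 2 * (k + 1).choose 2 = k * (k + 1) := by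
  rw [Nat.choose_two_right, Nat.add_sub_cancel, mul_comm (k + 1)]
  exact Nat.mul_div_cancel' (Nat.even_mul_succ_self k).two_dvd

lemma choose_two_sub_add_mul {N k : ℕ} (hk : k ≤ N) :
    (N - k).choose 2 + N * (N + 1 + k) = N.choose 2 + N + N * N + (k + 1).choose 2 := by
  obtain ⟨a, rfl⟩ : ∃ a, N = a + k := ⟨N - k, by omega⟩
  rw [Nat.add_sub_cancel]
  apply Nat.cast_injective (R := ℚ)
  push_cast [Nat.cast_choose_two]
  ring

lemma choose_two_add_add_mul {N k : ℕ} (hk : k ≤ N) :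
    (N + 1 + k).choose 2 + N * (N - k) = N.choose 2 + N + N * N + (k + 1).choose 2 := by
  obtain ⟨a, rfl⟩ : ∃ a, N = a + k := ⟨N - k, by omega⟩
  rw [Nat.add_sub_cancel]
  apply Nat.cast_injective (R := ℚ)
  push_cast [Nat.cast_choose_two]
  ring

lemma sum_antidiagonal_two_mul_add_one {M : Type*} [AddCommMonoid M] (f : ℕ × ℕ → M) (N : ℕ) :
    ∑ p ∈ antidiagonal (2 * N + 1), f p =
      ∑ k ∈ range (N + 1), (f (N - k, N + 1 + k) + f (N + 1 + k, N - k)) := by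
  rw [Nat.sum_antidiagonal_eq_sum_range_succ_mk, show (2 * N + 1).succ = (N + 1) + (N + 1) by omega,
    sum_range_add, sum_add_distrib, ← sum_range_reflect]
  congr 1 <;> refine sum_congr rfl fun k hk => ?_ <;> rw [mem_range] at hk <;> congr 2 <;> omega

section QBinomial

variable {R : Type*} [CommRing R] (q : R)

def qPoch (n : ℕ) : R := ∏ j ∈ range n, (1 - q ^ (j + 1))

lemma qPoch_succ (n : ℕ) : qPoch q (n + 1) = qPoch q n * (1 - q ^ (n + 1)) :=
  prod_range_succ _ _

/-- `qBinom q a b` is the Gaussian binomial coefficient `[a + b choose a]_q`; indexing by the two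
parts keeps truncated subtraction out of its identities. -/
def qBinom : ℕ → ℕ → R
  | 0, _ => 1
  | _ + 1, 0 => 1
  | a + 1, b + 1 => q ^ (b + 1) * qBinom a (b + 1) + qBinom (a + 1) b

@[simp] lemma qBinom_zero_left (b : ℕ) : qBinom q 0 b = 1 := by rw [qBinom]

@[simp] lemma qBinom_zero_right (a : ℕ) : qBinom q a 0 = 1 := by cases a <;> rw [qBinom]

lemma qBinom_succ_succ (a b : ℕ) :
    qBinom q (a + 1) (b + 1) = q ^ (b + 1) * qBinom q a (b + 1) + qBinom q (a + 1) b := by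
  rw [qBinom]

lemma qBinom_succ_succ' (a b : ℕ) :
    qBinom q (a + 1) (b + 1) = qBinom q a (b + 1) + q ^ (a + 1) * qBinom q (a + 1) b := by
  induction a generalizing b with
  | zero =>
    induction b with
    | zero => simp [qBinom_succ_succ]; ring
    | succ b ih =>
      have d1 := qBinom_succ_succ q 0 (b + 1)
      have d2 := qBinom_succ_succ q 0 b
      simp only [qBinom_zero_left] at ih d1 d2 ⊢
      linear_combination d1 + ih - q * d2
  | succ a iha =>
    induction b with
    | zero =>
      have h := iha 0
      have d1 := qBinom_succ_succ q (a + 1) 0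
      have d2 := qBinom_succ_succ q a 0
      simp only [qBinom_zero_right] at h d1 d2 ⊢
      linear_combination d1 - d2 + q * h
    | succ b ihb =>
      linear_combination qBinom_succ_succ q (a + 1) (b + 1) + q ^ (b + 2) * iha (b + 1) + ihb -
        qBinom_succ_succ q a (b + 1) - q ^ (a + 2) * qBinom_succ_succ q (a + 1) b

lemma qBinom_comm (a b : ℕ) : qBinom q a b = qBinom q b a := by
  induction a generalizing b with
  | zero => simp
  | succ a iha =>
    induction b with
    | zero => simp
    | succ b ihb => rw [qBinom_succ_succ, qBinom_succ_succ', iha, ihb]; ring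

lemma qBinom_mul_qPoch (a b : ℕ) : qBinom q a b * qPoch q a * qPoch q b = qPoch q (a + b) := by
  induction a generalizing b with
  | zero => simp [qPoch]
  | succ a iha =>
    induction b with
    | zero => simp [qPoch]
    | succ b ihb =>
      have ha := iha (b + 1)
      rw [show a + (b + 1) = a + 1 + b by ring] at ha
      rw [qBinom_succ_succ, ← add_assoc, qPoch_succ q (a + 1 + b)]
      rw [qPoch_succ q a] at ihb ⊢
      rw [qPoch_succ q b] at ha ⊢
      linear_combination q ^ (b + 1) * (1 - q ^ (a + 1)) * ha + (1 - q ^ (b + 1)) * ihb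

lemma map_qBinom {S : Type*} [CommRing S] (f : R →+* S) (a b : ℕ) :
    f (qBinom q a b) = qBinom (f q) a b := by
  induction a generalizing b with
  | zero => simp
  | succ a iha =>
    induction b with
    | zero => simp
    | succ b ihb => simp [qBinom_succ_succ, iha, ihb]

/-- The `q`-binomial theorem, in homogeneous form. -/
theorem prod_add_pow_mul (x y : R) (n : ℕ) :
    ∏ j ∈ range n, (y + q ^ j * x) =
      ∑ p ∈ antidiagonal n, q ^ p.1.choose 2 * qBinom q p.1 p.2 * x ^ p.1 * y ^ p.2 := by
  set t : ℕ × ℕ → R := fun p => q ^ p.1.choose 2 * qBinom q p.1 p.2 * x ^ p.1 * y ^ p.2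
  have pascal (a b : ℕ) :
      t (a + 1, b + 1) = q ^ (a + b + 1) * x * t (a, b + 1) + y * t (a + 1, b) := by
    simp only [t, qBinom_succ_succ, pow_choose_two_succ]
    ring
  induction n with
  | zero => simp [t]
  | succ n ih =>
    rw [prod_range_succ, ih]
    cases n with
    | zero => simp [t, Nat.sum_antidiagonal_succ]
    | succ m =>
      have hy : t (0, m + 2) = y * t (0, m + 1) := by simp [t, pow_succ]; ring
      have hx : t (m + 2, 0) = q ^ (m + 1) * x * t (m + 1, 0) := by
        simp [t, pow_choose_two_succ, pow_succ]; ring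
      have hmid : ∑ p ∈ antidiagonal m, t (p.1 + 1, p.2 + 1) =
          ∑ p ∈ antidiagonal m, (q ^ (m + 1) * x * t (p.1, p.2 + 1) + y * t (p.1 + 1, p.2)) :=
        sum_congr rfl fun p hp => by rw [pascal, mem_antidiagonal.mp hp]
      calc (∑ p ∈ antidiagonal (m + 1), t p) * (y + q ^ (m + 1) * x)
          = y * (t (0, m + 1) + ∑ p ∈ antidiagonal m, t (p.1 + 1, p.2)) +
              q ^ (m + 1) * x * (t (m + 1, 0) + ∑ p ∈ antidiagonal m, t (p.1, p.2 + 1)) := by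
            rw [← Nat.sum_antidiagonal_succ, ← Nat.sum_antidiagonal_succ']; ring
        _ = t (0, m + 2) + (t (m + 2, 0) + ∑ p ∈ antidiagonal m, t (p.1 + 1, p.2 + 1)) := by
            rw [hmid, sum_add_distrib, ← mul_sum, ← mul_sum, hy, hx]
            ring
        _ = ∑ p ∈ antidiagonal (m + 2), t p := by
            rw [Nat.sum_antidiagonal_succ, Nat.sum_antidiagonal_succ']

end QBinomial

section FiniteJacobi

variable {R : Type*} [CommRing R] (q : R)

lemma prod_range_pow_sub_pow (N : ℕ) :
    ∏ j ∈ range N, (q ^ N - q ^ j) = (-1) ^ N * q ^ N.choose 2 * qPoch q N := by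
  have h : ∀ j ∈ range N, q ^ N - q ^ j = -1 * q ^ j * (1 - q ^ (N - 1 - j + 1)) := by
    intro j hj
    rw [mem_range] at hj
    rw [show N - 1 - j + 1 = N - j by omega]
    conv_lhs => rw [← Nat.add_sub_cancel' hj.le, pow_add]
    ring
  rw [prod_congr rfl h, prod_mul_distrib, prod_mul_distrib, prod_const, card_range,
    prod_pow_eq_pow_sum, sum_range_id, ← Nat.choose_two_right, qPoch,
    prod_range_reflect (fun j => 1 - q ^ (j + 1))]

lemma prod_range_pow_add_sub_pow (N : ℕ) :
    ∏ i ∈ range N, (q ^ N - q ^ (N + (i + 1))) = q ^ (N * N) * qPoch q N := by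
  have h : ∀ i ∈ range N, q ^ N - q ^ (N + (i + 1)) = q ^ N * (1 - q ^ (i + 1)) :=
    fun i _ => by rw [pow_add]; ring
  rw [prod_congr rfl h, prod_mul_distrib, prod_const, card_range, ← pow_mul, qPoch]

lemma C_mul_neg_X_pow_add_C_mul_neg_X_pow (a : R) {N k : ℕ} (hk : k ≤ N) :
    Polynomial.C a * (-Polynomial.X) ^ (N - k) + Polynomial.C a * (-Polynomial.X) ^ (N + 1 + k) =
      (1 - Polynomial.X) * (Polynomial.C ((-1) ^ (N - k) * a) * Polynomial.X ^ (N - k) *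
        ∑ i ∈ range (2 * k + 1), Polynomial.X ^ i) := by
  rw [show N + 1 + k = N - k + (2 * k + 1) by omega, pow_add,
    Odd.neg_pow ⟨k, rfl⟩ (Polynomial.X : Polynomial R), neg_pow (Polynomial.X : Polynomial R),
    map_mul, map_pow, map_neg, map_one]
  linear_combination -(-1) ^ (N - k) * Polynomial.C a * Polynomial.X ^ (N - k) *
    mul_neg_geom_sum (Polynomial.X : Polynomial R) (2 * k + 1)

/-- The `q`-binomial theorem for `∏_{j ≤ 2N} (q ^ N - q ^ j x)`, with the terms of `x ^ (N - k)`
and `x ^ (N + 1 + k)` paired up; they carry the same coefficient by the symmetry of `qBinom`. -/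
lemma prod_range_C_pow_sub_C_pow_mul_X_eq_sum (N : ℕ) :
    ∏ j ∈ range (2 * N + 1), (Polynomial.C (q ^ N) - Polynomial.C (q ^ j) * Polynomial.X) =
      (1 - Polynomial.X) * ∑ k ∈ range (N + 1),
        Polynomial.C ((-1) ^ (N - k) * (q ^ (N.choose 2 + N + N * N) *
          (q ^ (k + 1).choose 2 * qBinom q (N - k) (N + 1 + k)))) * Polynomial.X ^ (N - k) *
          ∑ i ∈ range (2 * k + 1), Polynomial.X ^ i := by
  have hQB := prod_add_pow_mul (Polynomial.C q) (-Polynomial.X) (Polynomial.C (q ^ N)) (2 * N + 1)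
  simp only [← map_qBinom, ← map_pow, ← map_mul] at hQB
  have hsum : ∏ j ∈ range (2 * N + 1), (Polynomial.C (q ^ N) - Polynomial.C (q ^ j) * Polynomial.X)
      = ∑ p ∈ antidiagonal (2 * N + 1), Polynomial.C (q ^ p.1.choose 2 * qBinom q p.1 p.2 *
          (q ^ N) ^ p.2) * (-Polynomial.X) ^ p.1 :=
    (prod_congr rfl fun j _ => by ring).trans <|
      hQB.trans <| sum_congr rfl fun p _ => by rw [map_mul Polynomial.C _ ((q ^ N) ^ p.2)]; ring
  rw [hsum, mul_sum, sum_antidiagonal_two_mul_add_one]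
  refine sum_congr rfl fun k hk => ?_
  have hk : k ≤ N := Nat.lt_succ_iff.mp (mem_range.mp hk)
  have e1 : q ^ (N - k).choose 2 * qBinom q (N - k) (N + 1 + k) * (q ^ N) ^ (N + 1 + k) =
      q ^ (N.choose 2 + N + N * N) * (q ^ (k + 1).choose 2 * qBinom q (N - k) (N + 1 + k)) := by
    rw [← pow_mul, mul_right_comm, ← pow_add, choose_two_sub_add_mul hk, pow_add]; ring
  have e2 : q ^ (N + 1 + k).choose 2 * qBinom q (N + 1 + k) (N - k) * (q ^ N) ^ (N - k) =
      q ^ (N.choose 2 + N + N * N) * (q ^ (k + 1).choose 2 * qBinom q (N - k) (N + 1 + k)) := by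
    rw [← pow_mul, mul_right_comm, ← pow_add, choose_two_add_add_mul hk, pow_add, qBinom_comm]
    ring
  dsimp only
  rw [e1, e2]
  exact C_mul_neg_X_pow_add_C_mul_neg_X_pow _ hk

lemma prod_range_C_pow_sub_C_pow_mul_X_eq_mul (N : ℕ) :
    ∏ j ∈ range (2 * N + 1), (Polynomial.C (q ^ N) - Polynomial.C (q ^ j) * Polynomial.X) =
      (1 - Polynomial.X) * (Polynomial.C (q ^ N) *
        (∏ j ∈ range N, (Polynomial.C (q ^ N) - Polynomial.C (q ^ j) * Polynomial.X)) *
        ∏ i ∈ range N,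
          (Polynomial.C (q ^ N) - Polynomial.C (q ^ (N + (i + 1))) * Polynomial.X)) := by
  rw [show 2 * N + 1 = N + (N + 1) by ring, prod_range_add, prod_range_succ', add_zero]
  ring

/-- A finite form of Jacobi's identity: divide the two expansions of
`∏_{j ≤ 2N} (q ^ N - q ^ j x)` by `1 - x` and set `x = 1`. -/
theorem qPoch_sq_eq_sum [IsDomain R] (hq : q ≠ 0) (N : ℕ) :
    qPoch q N ^ 2 = ∑ k ∈ range (N + 1),
      (-1) ^ k * (2 * k + 1) * q ^ (k + 1).choose 2 * qBinom q (N - k) (N + 1 + k) := by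
  have h1X : (1 - Polynomial.X : Polynomial R) ≠ 0 := by
    rw [← neg_sub, neg_ne_zero, ← map_one Polynomial.C]
    exact Polynomial.X_sub_C_ne_zero 1
  have key := congrArg (Polynomial.eval 1) <| mul_left_cancel₀ h1X <|
    (prod_range_C_pow_sub_C_pow_mul_X_eq_mul q N).symm.trans
      (prod_range_C_pow_sub_C_pow_mul_X_eq_sum q N)
  simp only [Polynomial.eval_mul, Polynomial.eval_prod, Polynomial.eval_finsetSum,
    Polynomial.eval_sub, Polynomial.eval_C, Polynomial.eval_X, Polynomial.eval_pow, mul_one,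
    one_pow, sum_const, card_range, nsmul_eq_mul] at key
  have hsign (k : ℕ) (hk : k ≤ N) : (-1 : R) ^ (N - k) = (-1) ^ N * (-1) ^ k := by
    conv_rhs => rw [← Nat.sub_add_cancel hk, pow_add, mul_assoc, ← pow_add, ← two_mul, pow_mul]
    simp
  rw [prod_range_pow_sub_pow, prod_range_pow_add_sub_pow,
    sum_congr rfl fun k hk => by rw [hsign k (Nat.lt_succ_iff.mp (mem_range.mp hk))]] at key
  have hM : (-1 : R) ^ N * q ^ (N.choose 2 + N + N * N) ≠ 0 :=
    mul_ne_zero (pow_ne_zero _ (neg_ne_zero.mpr one_ne_zero)) (pow_ne_zero _ hq)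
  refine mul_left_cancel₀ hM ?_
  rw [mul_sum]
  convert key using 1
  · rw [pow_add, pow_add]; ring
  · exact sum_congr rfl fun k _ => by push_cast; ring

end FiniteJacobi

section ModXPow

variable {R : Type*} [CommRing R]

noncomputable abbrev modXPow (n : ℕ) : R⟦X⟧ →+* R⟦X⟧ ⧸ Ideal.span {(X : R⟦X⟧) ^ (n + 1)} :=
  Ideal.Quotient.mk _

lemma modXPow_eq_iff {n : ℕ} {f g : R⟦X⟧} :
    modXPow n f = modXPow n g ↔ ∀ m ≤ n, coeff m f = coeff m g := by
  simp [Ideal.Quotient.eq, Ideal.mem_span_singleton, X_pow_dvd_iff, sub_eq_zero]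

lemma modXPow_X_pow {n i : ℕ} (h : n < i) : modXPow n (X ^ i : R⟦X⟧) = 0 := by
  rw [Ideal.Quotient.eq_zero_iff_mem, Ideal.mem_span_singleton]
  exact pow_dvd_pow _ h

lemma modXPow_prod_one_sub_X_pow {n : ℕ} {s : Finset ℕ} (h : range n ⊆ s) :
    modXPow n (∏ i ∈ s, (1 - X ^ (i + 1)) : R⟦X⟧) = modXPow n (qPoch X n) := by
  rw [qPoch, map_prod, map_prod]
  refine (prod_subset h fun i _ hi => ?_).symm
  rw [map_sub, map_one, modXPow_X_pow (by simpa using hi), sub_zero]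

end ModXPow

section EulerProduct

lemma coeff_eulerProd {n N : ℕ} (h : n ≤ N) :
    coeff n eulerProd = coeff n (qPoch (X : ℤ⟦X⟧) N) := by
  rw [eulerProd, coeff_mk]
  simp_rw [add_comm 1]
  exact modXPow_eq_iff.1 ((modXPow_prod_one_sub_X_pow (range_subset_range.2 n.le_succ)).trans
    (modXPow_prod_one_sub_X_pow (range_subset_range.2 h)).symm) n le_rfl

lemma modXPow_eulerProd {n N : ℕ} (h : n ≤ N) : modXPow n eulerProd = modXPow n (qPoch X N) :=
  modXPow_eq_iff.2 fun _ hm => coeff_eulerProd (hm.trans h)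

theorem eulerProd_eq_pentagonalSeries : eulerProd = pentagonalSeries ℤ := by
  ext n
  obtain ⟨s, hs⟩ := Filter.eventually_atTop.1 (coeff_prod_one_sub_X_pow_eventually_eq ℤ n)
  rw [← hs (s ∪ range n) subset_union_left, coeff_eulerProd le_rfl]
  exact (modXPow_eq_iff.1 (modXPow_prod_one_sub_X_pow subset_union_right) n le_rfl).symm

lemma constantCoeff_eulerProd : constantCoeff eulerProd = 1 := by
  simpa [pentagonal, eulerProd_eq_pentagonalSeries] using coeff_pentagonalSeries_pentagonal ℤ 0

noncomputable def eulerUnit : ℤ⟦X⟧ˣ :=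
  Units.mkOfMulEqOne eulerProd (invOfUnit eulerProd 1)
    (mul_invOfUnit _ _ (by rw [constantCoeff_eulerProd, Units.val_one]))

lemma genPartGF_eq_eulerUnit_zpow (k : ℤ) : genPartGF k = ↑(eulerUnit ^ (-k)) := by
  unfold genPartGF
  split_ifs with h
  · rw [zpow_neg, ← Int.toNat_of_nonneg h, zpow_natCast, ← inv_pow, Units.val_pow_eq_pow_val]
    rfl
  · rw [← Int.toNat_of_nonneg (by omega : 0 ≤ -k), zpow_natCast, Units.val_pow_eq_pow_val]
    rfl

lemma genPartGF_mul_sub_four (δ : ℤ) (m : ℕ) :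
    genPartGF (δ * m - 4) = eulerProd ^ 4 * (↑(eulerUnit ^ (-δ)) : ℤ⟦X⟧) ^ m := by
  rw [genPartGF_eq_eulerUnit_zpow, show -(δ * m - 4) = 4 + -δ * (m : ℕ) by ring, zpow_add,
    zpow_mul, zpow_natCast, zpow_ofNat, Units.val_mul, Units.val_pow_eq_pow_val,
    Units.val_pow_eq_pow_val]
  rfl

lemma modXPow_qBinom_mul_eulerProd {n a b : ℕ} (ha : n ≤ a) (hb : n ≤ b) :
    modXPow n (qBinom X a b * eulerProd) = 1 := by
  have hprod := congrArg (modXPow n) (qBinom_mul_qPoch (X : ℤ⟦X⟧) a b)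
  rw [map_mul, map_mul, ← modXPow_eulerProd ha, ← modXPow_eulerProd hb,
    ← modXPow_eulerProd (ha.trans (Nat.le_add_right a b))] at hprod
  rw [map_mul]
  exact (eulerUnit.isUnit.map (modXPow n)).mul_right_cancel (by rw [one_mul]; exact hprod)

/-- **Jacobi's identity** `(q;q)_∞ ^ 3 = ∑_{k ≥ 0} (-1) ^ k (2k + 1) q ^ (k (k + 1) / 2)`. -/
theorem coeff_eulerProd_pow_three (n : ℕ) :
    coeff n (eulerProd ^ 3) =
      ∑ k ∈ range (n + 1), if (k + 1).choose 2 = n then (-1 : ℤ) ^ k * (2 * k + 1) else 0 := by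
  set N := 2 * n
  have hE3 : modXPow n (eulerProd ^ 3) = ∑ k ∈ range (N + 1),
      modXPow n ((-1 : ℤ⟦X⟧) ^ k * (2 * (k : ℤ⟦X⟧) + 1) * X ^ (k + 1).choose 2) *
        modXPow n (qBinom X (N - k) (N + 1 + k) * eulerProd) := by
    calc modXPow n (eulerProd ^ 3) = modXPow n (qPoch X N ^ 2 * eulerProd) := by
          rw [map_pow, map_mul, map_pow, modXPow_eulerProd (by omega : n ≤ N)]; ring
      _ = _ := by
          rw [qPoch_sq_eq_sum X X_ne_zero N, sum_mul, map_sum]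
          exact sum_congr rfl fun k _ => by rw [← map_mul]; congr 1; ring
  have hJ : modXPow n (eulerProd ^ 3) = modXPow n (∑ k ∈ range (n + 1),
      C ((-1 : ℤ) ^ k * (2 * k + 1)) * X ^ (k + 1).choose 2) := by
    rw [hE3, map_sum, ← sum_subset (range_subset_range.2 (by omega : n + 1 ≤ N + 1))]
    · refine sum_congr rfl fun k hk => ?_
      have hk : k ≤ n := Nat.lt_succ_iff.mp (mem_range.mp hk)
      rw [modXPow_qBinom_mul_eulerProd (by omega) (by omega), mul_one]
      simp
    · intro k _ hk
      have hk : n < k := by simpa using hk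
      rw [map_mul, modXPow_X_pow (hk.trans_le (le_choose_two_succ k)), mul_zero, zero_mul]
  rw [modXPow_eq_iff.1 hJ n le_rfl, map_sum]
  simp_rw [coeff_C_mul_X_pow, eq_comm]

end EulerProduct

section Congruence

lemma ZMod.eq_zero_of_sq_add_three_mul_sq_eq_zero {p : ℕ} [Fact p.Prime] (hp : p % 6 = 5)
    {x y : ZMod p} (h : x ^ 2 + 3 * y ^ 2 = 0) : y = 0 := by
  by_contra hy
  have hne (m : ℕ) (hm0 : 0 < m) (hm : m < p) : (m : ZMod p) ≠ 0 := by
    rw [Ne, ZMod.natCast_eq_zero_iff]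
    exact fun hd => absurd (Nat.le_of_dvd hm0 hd) (by omega)
  have h2 : (2 : ZMod p) ≠ 0 := by exact_mod_cast hne 2 (by omega) (by omega)
  have h3 : (3 : ZMod p) ≠ 0 := by exact_mod_cast hne 3 (by omega) (by omega)
  -- `s` is a primitive cube root of unity, which forces `3 ∣ p - 1`
  set s := (x - y) / (2 * y)
  have hv : 2 * y ≠ 0 := mul_ne_zero h2 hy
  have hsv : s * (2 * y) = x - y := div_mul_cancel₀ _ hv
  have hs : s ^ 2 + s + 1 = 0 := by
    refine (mul_eq_zero.mp ?_).resolve_left (pow_ne_zero 2 hv)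
    linear_combination (s * (2 * y) + (x - y) + 2 * y) * hsv + h
  have hs3 : s ^ 3 = 1 := by linear_combination (s - 1) * hs
  have hs1 : s ≠ 1 := fun h1 => h3 (by rw [h1] at hs; linear_combination hs)
  have hs0 : s ≠ 0 := fun h0 => by rw [h0] at hs3; norm_num at hs3
  have h3p := ZMod.orderOf_dvd_card_sub_one hs0
  rw [orderOf_eq_prime hs3 hs1] at h3p
  omega

lemma dvd_two_mul_add_one_of_dvd {p : ℕ} (hp : p.Prime) (hp6 : p % 6 = 5) (m : ℤ) (k : ℕ)
    (h : p ∣ 6 * (pentagonal m + (k + 1).choose 2) + 1) : (p : ℤ) ∣ 2 * k + 1 := by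
  have := Fact.mk hp
  rw [← ZMod.intCast_zmod_eq_zero_iff_dvd]
  refine ZMod.eq_zero_of_sq_add_three_mul_sq_eq_zero hp6 (x := ((6 * m - 1 : ℤ) : ZMod p)) ?_
  have hm := two_mul_natCast_pentagonal m
  have hk : 2 * ((k + 1).choose 2 : ℤ) = k * (k + 1) := by exact_mod_cast two_mul_choose_two_succ k
  have hid : (6 * m - 1) ^ 2 + 3 * (2 * (k : ℤ) + 1) ^ 2 =
      4 * ((6 * (pentagonal m + (k + 1).choose 2) + 1 : ℕ) : ℤ) := by
    push_cast
    linear_combination -12 * hm - 12 * hk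
  have hid' := congrArg (Int.cast : ℤ → ZMod p) hid
  have h0 := (ZMod.natCast_eq_zero_iff _ p).2 h
  push_cast at hid' h0 ⊢
  rw [hid', h0, mul_zero]

theorem coeff_eulerProd_pow_four_dvd {p : ℕ} (hp : p.Prime) (hp6 : p % 6 = 5) {a : ℕ}
    (ha : p ∣ 6 * a + 1) : (p : ℤ) ∣ coeff a (eulerProd ^ 4) := by
  rw [pow_succ', coeff_mul]
  refine dvd_sum fun ⟨i, j⟩ hij => ?_
  rw [HasAntidiagonal.mem_antidiagonal] at hij
  dsimp only at hij ⊢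
  rw [coeff_eulerProd_pow_three, mul_sum]
  refine dvd_sum fun k _ => ?_
  split_ifs with hk
  · by_cases hi : i ∈ Set.range pentagonal
    · obtain ⟨m, rfl⟩ := hi
      refine dvd_mul_of_dvd_right (dvd_mul_of_dvd_right ?_ _) _
      exact dvd_two_mul_add_one_of_dvd hp hp6 m k (by rwa [hk, hij])
    · simp [eulerProd_eq_pentagonalSeries, coeff_pentagonalSeries_eq_zero ℤ hi]
  · simp

lemma PowerSeries.coeff_pow_expChar_eq_zero {R : Type*} [CommRing R] (p : ℕ) [ExpChar R p]
    (g : R⟦X⟧) {b : ℕ} (hb : ¬ p ∣ b) : coeff b (g ^ p) = 0 := by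
  have hfrob := MvPowerSeries.map_frobenius_expand p (expChar_ne_zero R p) (f := g)
  change map (frobenius R p) (expand p (expChar_ne_zero R p) g) = g ^ p at hfrob
  rw [← hfrob, coeff_map, coeff_expand_of_not_dvd _ _ _ hb, map_zero]

lemma PowerSeries.coeff_mul_pow_expChar_eq_zero {R : Type*} [CommRing R] (p : ℕ) [ExpChar R p]
    {f : R⟦X⟧} (g : R⟦X⟧) {m : ℕ} (hf : ∀ a, a ≡ m [MOD p] → coeff a f = 0) :
    coeff m (f * g ^ p) = 0 := by
  rw [coeff_mul]
  refine sum_eq_zero fun ⟨a, b⟩ hab => ?_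
  rw [HasAntidiagonal.mem_antidiagonal] at hab
  by_cases hb : p ∣ b
  · rw [hf a (hab ▸ ((Nat.modEq_zero_iff_dvd.mpr hb).add_left a).symm), zero_mul]
  · rw [coeff_pow_expChar_eq_zero p g hb, mul_zero]

lemma dvd_six_mul_add_one_of_modEq {ω n a : ℕ} (hω6 : ω % 6 = 5) (hn : 1 ≤ n)
    (ha : a ≡ n * ω - (ω + 1) / 6 [MOD ω]) : ω ∣ 6 * a + 1 := by
  have h0 : 6 * (n * ω - (ω + 1) / 6) + 1 ≡ 0 [MOD ω] := by
    have hle : (ω + 1) / 6 ≤ n * ω := le_trans (by omega) (Nat.le_mul_of_pos_left ω hn)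
    have hdvd : ω ∣ 6 * (n * ω) := dvd_mul_of_dvd_right (dvd_mul_left ω n) 6
    generalize n * ω = M at hle hdvd
    rw [Nat.modEq_zero_iff_dvd]
    exact (Nat.dvd_add_right (dvd_refl ω)).mp (by convert hdvd using 1; omega)
  exact Nat.modEq_zero_iff_dvd.mp (((ha.mul_left 6).add_right 1).trans h0)

end Congruence

/-- If `ω` is a prime with `ω ≡ 5 (mod 6)`, `δ ∈ ℤ`, and `n ≥ 1`, then
`p_{δω-4}(nω - (ω+1)/6) ≡ 0 (mod ω)`. -/
theorem genPart_congruence_mod_omega (ω : ℕ) (hω : Nat.Prime ω) (hω6 : ω % 6 = 5)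
    (δ : ℤ) (n : ℕ) (hn : 1 ≤ n) :
    (ω : ℤ) ∣ PowerSeries.coeff (R := ℤ) (n * ω - (ω + 1) / 6) (genPartGF (δ * ω - 4)) := by
  have := Fact.mk hω
  rw [← ZMod.intCast_zmod_eq_zero_iff_dvd, ← eq_intCast (Int.castRingHom (ZMod ω)), ← coeff_map,
    genPartGF_mul_sub_four, map_mul, map_pow (PowerSeries.map _) _ ω]
  refine coeff_mul_pow_expChar_eq_zero ω _ fun a ha => ?_
  rw [coeff_map, eq_intCast, ZMod.intCast_zmod_eq_zero_iff_dvd]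
  exact coeff_eulerProd_pow_four_dvd hω hω6 (dvd_six_mul_add_one_of_modEq hω6 hn ha)
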